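/- arXiv:1409.8523 — 3 statements merged into one kernel-verified Lean document; each statement's English description precedes it below -/
import Mathlib

section
/- Let t : E → F be essentially defined and orthogonally closable, and let v : E ⊕ F → F ⊕ E be the unitary (x,y) ↦ (−y,x). Then the following are equivalent: (a) t is graph regular; (b) Graph(t) ⊕ v Graph(t*) = E ⊕ F; (c) Range(1 + t*t) = E and Range(1 + tt*) = F. Moreover, if t is graph regular, then D(t*t) is an essential core for t (i.e. Graph(t restricted to D(t*t))^⊥ = Graph(t)^⊥) and t* is graph regular; and if t is orthogonally closed and t* is graph regular, then t is graph regular. -/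
/-!
The argument rests on the identity `v⁻¹ Graph(t*) = Graph(t)^⊥`, together with the fact that
`v` preserves the `A`-valued inner product. Hence (b) says that `Graph(t)` is complemented, and a
complemented set is orthogonally closed by definiteness of the inner product. Splitting
`(x, 0)` and `(0, y)` along `Graph(t) + Graph(t)^⊥` is the same as solving `x = u + t*t u` and
`y = v + t t* v`, which gives (c). Regularity of `t*` amounts to `Graph(t)^⊥` being complemented,
and this follows from `Graph(t)` being complemented because `Graph(t) ⊆ Graph(t)^⊥⊥`.
-/

open scoped RightActions Pointwise

noncomputable section

namespace CStarReg

variable (A : Type*)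

/-- The orthogonal complement of a subset of a Hilbert C*-module with respect to the
`A`-valued inner product. -/
def ortho {E : Type*} [Zero A] [Inner A E] (S : Set E) : Set E :=
  {x | ∀ y ∈ S, (inner A x y : A) = 0}

/-- A subset of a Hilbert C*-module is *essential* if its orthogonal complement is trivial. -/
def IsEssential {E : Type*} [Zero A] [Zero E] [Inner A E] (S : Set E) : Prop :=
  ortho A S = {0}

/-- A subset is *orthogonally closed* if it coincides with its double orthogonal complement. -/
def IsOrthoClosedSet {E : Type*} [Zero A] [Inner A E] (S : Set E) : Prop :=
  ortho A (ortho A S) = S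

/-- The `A`-valued inner product on the direct sum `E ⊕ F` of two Hilbert C*-modules. -/
instance prodInner {E F : Type*} [Add A] [Inner A E] [Inner A F] : Inner A (E × F) :=
  ⟨fun p q => (inner A p.1 q.1 : A) + (inner A p.2 q.2 : A)⟩

/-- A (not necessarily densely or essentially defined) `ℂ`-linear and `A`-linear operator
from `E` to `F`, encoded by its graph. -/
structure Unbounded (E F : Type*) [AddCommGroup E] [AddCommGroup F]
    [Module ℂ E] [Module ℂ F] [SMul Aᵐᵒᵖ E] [SMul Aᵐᵒᵖ F] where
  graph : Set (E × F)
  zero_mem : ((0 : E), (0 : F)) ∈ graph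
  add_mem : ∀ ⦃p q : E × F⦄, p ∈ graph → q ∈ graph → p + q ∈ graph
  smul_mem : ∀ (c : ℂ) ⦃p : E × F⦄, p ∈ graph → c • p ∈ graph
  smulA_mem : ∀ (a : A) ⦃p : E × F⦄, p ∈ graph → (p.1 <• a, p.2 <• a) ∈ graph
  single_valued : ∀ ⦃y : F⦄, ((0 : E), y) ∈ graph → y = 0

/-- An adjointable (everywhere defined, with everywhere defined adjoint) operator between
Hilbert C*-modules. -/
structure Adjointable (E F : Type*) [Inner A E] [Inner A F] where
  toFun : E → F
  adjFun : F → E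
  adjoint_eq : ∀ (x : E) (y : F), (inner A (toFun x) y : A) = inner A x (adjFun y)

section Operators

variable {A}
variable {E F G H : Type*} [AddCommGroup E] [AddCommGroup F] [AddCommGroup G] [AddCommGroup H]
  [Module ℂ E] [Module ℂ F] [Module ℂ G] [Module ℂ H]
  [SMul Aᵐᵒᵖ E] [SMul Aᵐᵒᵖ F] [SMul Aᵐᵒᵖ G] [SMul Aᵐᵒᵖ H]

namespace Unbounded

/-- The domain of an operator. -/
def dom (t : Unbounded A E F) : Set E := Prod.fst '' t.graph

/-- The range of an operator. -/
def ran (t : Unbounded A E F) : Set F := Prod.snd '' t.graph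

/-- The null space of an operator. -/
def ker (t : Unbounded A E F) : Set E := {x | (x, (0 : F)) ∈ t.graph}

/-- `t ⊆ s`, i.e. `s` extends `t`. -/
def le (t s : Unbounded A E F) : Prop := t.graph ⊆ s.graph

end Unbounded

variable (A)

section WithInner

variable [Inner A E] [Inner A F] [Inner A G] [Inner A H] [Add A]

/-- The graph of the adjoint: `(y, z)` belongs to `adjSet A g` iff
`⟪t x, y⟫ = ⟪x, z⟫` for all `(x, t x) ∈ g`. -/
def adjSet (g : Set (E × F)) : Set (F × E) :=
  {q | ∀ p ∈ g, (inner A p.2 q.1 : A) = inner A p.1 q.2}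

end WithInner

/-- Composition of graphs. -/
def compSet (g₂ : Set (F × G)) (g₁ : Set (E × F)) : Set (E × G) :=
  {p | ∃ y, (p.1, y) ∈ g₁ ∧ (y, p.2) ∈ g₂}

/-- The graph of `1 + s` where `g` is the graph of `s`. -/
def oneAddSet (g : Set (E × E)) : Set (E × E) :=
  {p | ∃ y, (p.1, y) ∈ g ∧ p.2 = p.1 + y}

variable {A}

namespace Unbounded

variable [Inner A E] [Inner A F] [Add A] [Zero A]

/-- The graph of the adjoint operator `t*`. -/
def adjGraph (t : Unbounded A E F) : Set (F × E) := adjSet A t.graph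

/-- The domain of the adjoint operator `t*`. -/
def adjDom (t : Unbounded A E F) : Set F := Prod.fst '' (adjSet A t.graph)

/-- `s` is the adjoint of `t`. -/
def IsAdjointOf (s : Unbounded A F E) (t : Unbounded A E F) : Prop :=
  s.graph = adjSet A t.graph

/-- `t` is essentially defined, i.e. its domain has trivial orthogonal complement. -/
def EssentiallyDefined (t : Unbounded A E F) : Prop := IsEssential A t.dom

/-- `t` is orthogonally closed, i.e. its graph coincides with its double orthogonal
complement in `E ⊕ F`. -/
def OrthoClosed (t : Unbounded A E F) : Prop := ortho A (ortho A t.graph) = t.graph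

/-- `t` is graph regular: essentially defined, orthogonally closed, and its graph is
orthogonally complemented in `E ⊕ F`. -/
def GraphRegular (t : Unbounded A E F) : Prop :=
  t.EssentiallyDefined ∧ t.OrthoClosed ∧ t.graph + ortho A t.graph = Set.univ

/-- The graph of `t* t`. -/
def adjCompGraph (t : Unbounded A E F) : Set (E × E) := compSet (adjSet A t.graph) t.graph

/-- The graph of `t t*`. -/
def compAdjGraph (t : Unbounded A E F) : Set (F × F) := compSet t.graph (adjSet A t.graph)

/-- `a = (1 + t* t)⁻¹` as an everywhere defined map. -/
def IsAt (t : Unbounded A E F) (a : E → E) : Prop :=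
  ∀ x : E, (a x, x) ∈ oneAddSet t.adjCompGraph

/-- `a⋆ = (1 + t t*)⁻¹` as an everywhere defined map. -/
def IsAtStar (t : Unbounded A E F) (a : F → F) : Prop :=
  ∀ y : F, (a y, y) ∈ oneAddSet t.compAdjGraph

/-- `b = t ∘ a` as an everywhere defined map (where `a = (1 + t* t)⁻¹`, this is `b_t`). -/
def IsBt (t : Unbounded A E F) (a : E → E) (b : E → F) : Prop :=
  ∀ x : E, (a x, b x) ∈ t.graph

end Unbounded

namespace Adjointable

variable [Inner A E] [Inner A F]

/-- Self-adjointness of an adjointable operator. -/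
def IsSelfAdj (a : Adjointable A E E) : Prop := a.adjFun = a.toFun

/-- Positivity of an adjointable operator: `⟪x, a x⟫ ≥ 0` for all `x`. -/
def Nonneg [LE A] [Zero A] (a : Adjointable A E E) : Prop :=
  ∀ x : E, (0 : A) ≤ inner A x (a.toFun x)

/-- `r` is the positive square root of `a` in the C*-algebra `Adj(E)`. -/
def IsPosSqrtOf [LE A] [Zero A] (r a : Adjointable A E E) : Prop :=
  r.Nonneg ∧ r.adjFun = r.toFun ∧ ∀ x : E, r.toFun (r.toFun x) = a.toFun x

/-- The kernel of an adjointable operator is trivial. -/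
def KerTrivial (a : Adjointable A E F) : Prop := ∀ x : E, a.toFun x = 0 → x = 0

end Adjointable

variable (A)

/-- The graph of the projection onto a submodule `G` (with domain `G ⊕ G^⊥`). -/
def projSet [Zero A] [Inner A E] (G : Set E) : Set (E × E) :=
  {p | ∃ x ∈ G, ∃ y ∈ ortho A G, p = (x + y, x)}

/-- The restriction of a graph to those points whose first component lies in `D`. -/
def restrictSet (g : Set (E × F)) (D : Set E) : Set (E × F) := {p ∈ g | p.1 ∈ D}

end Operators

end CStarReg

/-- The Hilbert C*-module class as it stood in the older Mathlib (right action through `Aᵐᵒᵖ`,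
inner product `A`-linear in the second variable for the right action). -/
class OldCStarModule (A E : Type*) [NonUnitalSemiring A] [StarRing A] [Module ℂ A]
    [AddCommGroup E] [Module ℂ E] [PartialOrder A] [SMul Aᵐᵒᵖ E] [Norm A] [Norm E]
    extends Inner A E where
  inner_add_right {x} {y} {z} : inner x (y + z) = inner x y + inner x z
  inner_self_nonneg {x} : 0 ≤ inner x x
  inner_self {x} : inner x x = 0 ↔ x = 0
  inner_op_smul_right {a : A} {x y : E} : inner x (y <• a) = inner x y * a
  inner_smul_right_complex {z : ℂ} {x} {y} : inner x (z • y) = z • inner x y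
  star_inner x y : star (inner x y) = inner y x
  norm_eq_sqrt_norm_inner_self x : ‖x‖ = √‖inner x x‖

namespace OldCStarModule

variable {A : Type*} [NonUnitalRing A] [StarRing A] [Module ℂ A] [PartialOrder A] [Norm A]
variable {E : Type*} [NormedAddCommGroup E] [Module ℂ E] [SMul Aᵐᵒᵖ E] [OldCStarModule A E]

lemma inner_zero_right (x : E) : inner A x (0 : E) = 0 := by
  have h := inner_add_right (A := A) (x := x) (y := (0 : E)) (z := 0)
  rwa [add_zero, left_eq_add] at h

lemma inner_neg_right (x y : E) : inner A x (-y) = -inner A x y := by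
  have h := inner_add_right (A := A) (x := x) (y := y) (z := -y)
  rw [add_neg_cancel, inner_zero_right] at h
  exact eq_neg_of_add_eq_zero_right h.symm

lemma inner_add_left (x y z : E) : inner A (x + y) z = inner A x z + inner A y z := by
  rw [← star_inner z, inner_add_right, star_add, star_inner, star_inner]

lemma inner_neg_left (x y : E) : inner A (-x) y = -inner A x y := by
  rw [← star_inner y, inner_neg_right, star_neg, star_inner]

end OldCStarModule

namespace CStarReg

section Rotation

variable {E F : Type*} [AddCommGroup E] [AddCommGroup F]

/-- The inverse `-v` of the paper's unitary `v : (x, y) ↦ (-y, x)`. -/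
def rot : E × F ≃+ F × E where
  toFun p := (p.2, -p.1)
  invFun q := (-q.2, q.1)
  left_inv p := by simp
  right_inv q := by simp
  map_add' p q := Prod.ext rfl (neg_add p.1 q.1)

@[simp] lemma rot_apply (p : E × F) : rot p = (p.2, -p.1) := rfl

end Rotation

variable {A : Type*} [NonUnitalRing A] [StarRing A] [Module ℂ A] [PartialOrder A] [Norm A]
variable {E : Type*} [NormedAddCommGroup E] [Module ℂ E] [SMul Aᵐᵒᵖ E] [OldCStarModule A E]
variable {F : Type*} [NormedAddCommGroup F] [Module ℂ F] [SMul Aᵐᵒᵖ F] [OldCStarModule A F]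

section ProdInner

lemma inner_prod (p q : E × F) : (inner A p q : A) = inner A p.1 q.1 + inner A p.2 q.2 := rfl

lemma inner_prod_add_left (p q r : E × F) :
    (inner A (p + q) r : A) = inner A p r + inner A q r := by
  simp only [inner_prod, Prod.fst_add, Prod.snd_add, OldCStarModule.inner_add_left]
  abel

lemma inner_prod_neg_left (p r : E × F) : (inner A (-p) r : A) = -inner A p r := by
  simp only [inner_prod, Prod.fst_neg, Prod.snd_neg, OldCStarModule.inner_neg_left, neg_add]

lemma star_inner_prod (p q : E × F) : star (inner A p q : A) = inner A q p := by
  simp only [inner_prod, star_add, OldCStarModule.star_inner]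

lemma eq_zero_of_inner_prod_self_eq_zero [IsOrderedAddMonoid A] {p : E × F}
    (h : (inner A p p : A) = 0) : p = 0 := by
  have h₁ : (0 : A) ≤ inner A p.1 p.1 := OldCStarModule.inner_self_nonneg
  have h₂ : (0 : A) ≤ inner A p.2 p.2 := OldCStarModule.inner_self_nonneg
  have hsum : (inner A p.1 p.1 : A) + inner A p.2 p.2 = 0 := h
  have hz₁ : (inner A p.1 p.1 : A) = 0 :=
    le_antisymm (by rw [eq_neg_of_add_eq_zero_left hsum]; exact neg_nonpos.mpr h₂) h₁
  rw [hz₁, zero_add] at hsum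
  exact Prod.ext (OldCStarModule.inner_self.mp hz₁) (OldCStarModule.inner_self.mp hsum)

lemma inner_rot_rot (p q : E × F) : (inner A (rot p) (rot q) : A) = inner A p q := by
  simp only [rot_apply, inner_prod, OldCStarModule.inner_neg_left,
    OldCStarModule.inner_neg_right, neg_neg]
  exact add_comm _ _

end ProdInner

section Ortho

variable {S T : Set (E × F)}

lemma ortho_add_mem {p q : E × F} (hp : p ∈ ortho A S) (hq : q ∈ ortho A S) :
    p + q ∈ ortho A S := fun r hr => by
  rw [inner_prod_add_left, hp r hr, hq r hr, add_zero]

lemma ortho_neg_mem {p : E × F} (hp : p ∈ ortho A S) : -p ∈ ortho A S := fun r hr => by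
  rw [inner_prod_neg_left, hp r hr, neg_zero]

lemma ortho_sub_mem {p q : E × F} (hp : p ∈ ortho A S) (hq : q ∈ ortho A S) :
    p - q ∈ ortho A S := by
  rw [sub_eq_add_neg]
  exact ortho_add_mem hp (ortho_neg_mem hq)

lemma ortho_anti (h : S ⊆ T) : ortho A T ⊆ ortho A S := fun _ hq p hp => hq p (h hp)

lemma subset_ortho_ortho : S ⊆ ortho A (ortho A S) := fun p hp q hq => by
  rw [← star_inner_prod, hq p hp, star_zero]

lemma ortho_ortho_ortho : ortho A (ortho A (ortho A S)) = ortho A S :=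
  (ortho_anti subset_ortho_ortho).antisymm subset_ortho_ortho

lemma ortho_image_rot : ortho A (rot '' S) = rot '' ortho A S := by
  ext q
  obtain ⟨q, rfl⟩ := rot.surjective q
  simp only [rot.injective.mem_set_image]
  exact ⟨fun hq p hp => inner_rot_rot (A := A) q p ▸ hq _ ⟨p, hp, rfl⟩,
    fun hq _ ⟨p, hp, hpq⟩ => hpq ▸ (inner_rot_rot (A := A) q p).symm ▸ hq p hp⟩

/-- An element of `S^⊥⊥` minus its `S`-component lies in `S^⊥ ∩ S^⊥⊥ = {0}`. -/
lemma ortho_ortho_eq_of_add_ortho_eq_univ [IsOrderedAddMonoid A]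
    (h : S + ortho A S = Set.univ) :
    ortho A (ortho A S) = S := by
  refine Set.Subset.antisymm (fun x hx => ?_) subset_ortho_ortho
  obtain ⟨p, hp, n, hn, rfl⟩ := Set.mem_add.mp (h ▸ Set.mem_univ x)
  have hn' : n ∈ ortho A (ortho A S) := by
    simpa using ortho_sub_mem hx (subset_ortho_ortho hp)
  rwa [eq_zero_of_inner_prod_self_eq_zero (hn' n hn), add_zero]

lemma ortho_add_ortho_ortho_eq_univ (h : S + ortho A S = Set.univ) :
    ortho A S + ortho A (ortho A S) = Set.univ := by
  rw [add_comm]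
  exact Set.eq_univ_of_univ_subset (h ▸ Set.add_subset_add_right subset_ortho_ortho)

lemma ortho_eq_of_subset (h : S + ortho A S = Set.univ) (hTS : T ⊆ S)
    (hzero : ∀ p ∈ S, p ∈ ortho A T → p = 0) : ortho A T = ortho A S := by
  refine Set.Subset.antisymm (fun q hq => ?_) (ortho_anti hTS)
  obtain ⟨p, hp, n, hn, rfl⟩ := Set.mem_add.mp (h ▸ Set.mem_univ q)
  have hpT : p ∈ ortho A T := by simpa using ortho_sub_mem hq (ortho_anti hTS hn)
  rwa [hzero p hp hpT, zero_add]

end Ortho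

section Adjoint

variable {S : Set (E × F)}

lemma mem_adjSet_iff {q : F × E} : q ∈ adjSet A S ↔ rot q ∈ ortho A S := by
  refine forall₂_congr fun p _ => ?_
  change _ ↔ (inner A q.2 p.1 : A) + inner A (-q.1) p.2 = 0
  rw [OldCStarModule.inner_neg_left, ← sub_eq_add_neg, sub_eq_zero,
    ← OldCStarModule.star_inner p.1, ← OldCStarModule.star_inner p.2, star_inj, eq_comm]

lemma image_rot_adjSet : rot '' adjSet A S = ortho A S := by
  rw [show adjSet A S = rot ⁻¹' ortho A S from Set.ext fun _ => mem_adjSet_iff,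
    Set.image_preimage_eq _ rot.surjective]

lemma image_rot_ortho_adjSet : rot '' ortho A (adjSet A S) = ortho A (ortho A S) := by
  rw [← ortho_image_rot, image_rot_adjSet]

lemma ortho_ortho_adjSet : ortho A (ortho A (adjSet A S)) = adjSet A S := by
  apply Set.image_injective.mpr rot.injective
  rw [← ortho_image_rot, image_rot_ortho_adjSet, ortho_ortho_ortho, image_rot_adjSet]

lemma adjSet_add_ortho_eq_univ_iff :
    adjSet A S + ortho A (adjSet A S) = Set.univ ↔
      ortho A S + ortho A (ortho A S) = Set.univ := by
  rw [← (Set.image_injective.mpr rot.injective).eq_iff, Set.image_add,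
    Set.image_univ_of_surjective rot.surjective, image_rot_adjSet, image_rot_ortho_adjSet]

end Adjoint

namespace Unbounded

variable (t : Unbounded A E F)

lemma graph_add_ortho_eq_univ_iff :
    t.graph + ortho A t.graph = Set.univ ↔
      (∀ x : E, (x, (0 : F)) ∈ t.graph + ortho A t.graph) ∧
        ∀ y : F, ((0 : E), y) ∈ t.graph + ortho A t.graph := by
  refine ⟨fun h => ⟨fun _ => h ▸ Set.mem_univ _, fun _ => h ▸ Set.mem_univ _⟩, ?_⟩
  rintro ⟨hx, hy⟩
  refine Set.eq_univ_of_forall fun ⟨x, y⟩ => ?_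
  obtain ⟨p₁, hp₁, n₁, hn₁, h₁⟩ := Set.mem_add.mp (hx x)
  obtain ⟨p₂, hp₂, n₂, hn₂, h₂⟩ := Set.mem_add.mp (hy y)
  refine Set.mem_add.mpr
    ⟨p₁ + p₂, t.add_mem hp₁ hp₂, n₁ + n₂, ortho_add_mem hn₁ hn₂, ?_⟩
  rw [add_add_add_comm, h₁, h₂, Prod.mk_add_mk, add_zero, zero_add]

/-- `x = u + t*t u` splits `(x, 0)` as `(u, t u) + (t*t u, -t u)`, the second summand being
orthogonal to the graph. -/
lemma ran_oneAdd_adjComp_eq_univ_iff :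
    Prod.snd '' oneAddSet t.adjCompGraph = Set.univ ↔
      ∀ x : E, (x, (0 : F)) ∈ t.graph + ortho A t.graph := by
  refine Set.eq_univ_iff_forall.trans (forall_congr' fun x => ⟨?_, fun h => ?_⟩)
  · rintro ⟨⟨u, x⟩, ⟨w', ⟨w, huw, hww'⟩, hx⟩, rfl⟩
    refine Set.mem_add.mpr ⟨(u, w), huw, rot (w, w'), mem_adjSet_iff.mp hww', ?_⟩
    simpa using hx.symm
  · obtain ⟨p, hp, n, hn, hpn⟩ := Set.mem_add.mp h
    have h₁ : p.1 + n.1 = x := congrArg Prod.fst hpn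
    have h₂ : p.2 + n.2 = 0 := congrArg Prod.snd hpn
    have hn₂ : n.2 = -p.2 := eq_neg_of_add_eq_zero_right h₂
    refine ⟨(p.1, x), ⟨n.1, ⟨p.2, hp, mem_adjSet_iff.mpr ?_⟩, h₁.symm⟩, rfl⟩
    rwa [rot_apply, ← hn₂]

/-- `y = v + t t* v` splits `(0, y)` as `(t* v, t t* v) + (-t* v, v)`, the second summand being
orthogonal to the graph. -/
lemma ran_oneAdd_compAdj_eq_univ_iff :
    Prod.snd '' oneAddSet t.compAdjGraph = Set.univ ↔
      ∀ y : F, ((0 : E), y) ∈ t.graph + ortho A t.graph := by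
  refine Set.eq_univ_iff_forall.trans (forall_congr' fun y => ⟨?_, fun h => ?_⟩)
  · rintro ⟨⟨v, y⟩, ⟨y', ⟨u, hvu, huy'⟩, hy⟩, rfl⟩
    refine Set.mem_add.mpr
      ⟨(u, y'), huy', -rot (v, u), ortho_neg_mem (mem_adjSet_iff.mp hvu), ?_⟩
    simpa [add_comm] using hy.symm
  · obtain ⟨p, hp, n, hn, hpn⟩ := Set.mem_add.mp h
    have h₁ : p.1 + n.1 = 0 := congrArg Prod.fst hpn
    have h₂ : p.2 + n.2 = y := congrArg Prod.snd hpn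
    have hn₁ : n.1 = -p.1 := eq_neg_of_add_eq_zero_right h₁
    refine ⟨(n.2, y), ⟨p.2, ⟨p.1, mem_adjSet_iff.mpr ?_, hp⟩, ?_⟩, rfl⟩
    · have hrot : rot (n.2, p.1) = -n := Prod.ext (by simp [hn₁]) rfl
      exact hrot ▸ ortho_neg_mem hn
    · exact h₂.symm.trans (add_comm _ _)

/-- Writing `p.1 = u + t*t u`, orthogonality of `p` to `(u, t u)` gives `⟪p.1, p.1⟫ = 0`. -/
lemma eq_zero_of_mem_graph_of_mem_ortho_restrictSet
    (h : Prod.snd '' oneAddSet t.adjCompGraph = Set.univ) {p : E × F} (hp : p ∈ t.graph)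
    (hp' : p ∈ ortho A (restrictSet t.graph (Prod.fst '' t.adjCompGraph))) : p = 0 := by
  obtain ⟨⟨u, x⟩, ⟨w', ⟨w, huw, hww'⟩, hx⟩, hxp⟩ := h ▸ Set.mem_univ p.1
  have horth : (inner A p.1 u : A) + inner A p.2 w = 0 :=
    hp' (u, w) ⟨huw, ⟨(u, w'), ⟨w, huw, hww'⟩, rfl⟩⟩
  have hadj : (inner A p.2 w : A) = inner A p.1 w' := hww' p hp
  have hsplit : p.1 = u + w' := hxp.symm.trans hx
  have hself : (inner A p.1 (u + w') : A) = 0 := by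
    rw [OldCStarModule.inner_add_right, ← hadj, horth]
  have hp₁ : p.1 = 0 := (OldCStarModule.inner_self (A := A)).mp (hsplit ▸ hself)
  have hp₂ : p.2 = 0 := t.single_valued (hp₁ ▸ hp)
  exact Prod.ext hp₁ hp₂

lemma ortho_restrictSet_dom_adjComp (h : t.graph + ortho A t.graph = Set.univ) :
    ortho A (restrictSet t.graph (Prod.fst '' t.adjCompGraph)) = ortho A t.graph := by
  have hran := (t.ran_oneAdd_adjComp_eq_univ_iff).mpr fun _ => h ▸ Set.mem_univ _
  exact ortho_eq_of_subset h (fun _ hp => hp.1) fun p hp hp' =>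
    t.eq_zero_of_mem_graph_of_mem_ortho_restrictSet hran hp hp'

lemma graphRegular_of_isAdjointOf {s : Unbounded A F E} (hs : s.IsAdjointOf t)
    (hdom : IsEssential A t.adjDom) (h : t.graph + ortho A t.graph = Set.univ) :
    s.GraphRegular := by
  have hgraph : s.graph = adjSet A t.graph := hs
  refine ⟨?_, ?_, ?_⟩ <;> simp only [EssentiallyDefined, OrthoClosed, dom, hgraph]
  · exact hdom
  · exact ortho_ortho_adjSet
  · exact adjSet_add_ortho_eq_univ_iff.mpr (ortho_add_ortho_ortho_eq_univ h)

lemma add_ortho_eq_univ_of_isAdjointOf {s : Unbounded A F E} (hs : s.IsAdjointOf t)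
    (hs_reg : s.GraphRegular) (ht : t.OrthoClosed) : t.graph + ortho A t.graph = Set.univ := by
  have h := adjSet_add_ortho_eq_univ_iff.mp (hs ▸ hs_reg.2.2)
  rwa [ht, add_comm] at h

lemma graphRegular_iff_add_ortho_eq_univ [IsOrderedAddMonoid A] (h : t.EssentiallyDefined) :
    t.GraphRegular ↔ t.graph + ortho A t.graph = Set.univ :=
  ⟨fun hreg => hreg.2.2, fun hc => ⟨h, ortho_ortho_eq_of_add_ortho_eq_univ hc, hc⟩⟩

end Unbounded

end CStarReg

section Statements

open CStarReg Unbounded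

variable {A : Type*} [NonUnitalCStarAlgebra A] [PartialOrder A] [StarOrderedRing A]
variable {E : Type*} [NormedAddCommGroup E] [Module ℂ E] [SMul Aᵐᵒᵖ E] [OldCStarModule A E]
  [CompleteSpace E]
variable {F : Type*} [NormedAddCommGroup F] [Module ℂ F] [SMul Aᵐᵒᵖ F] [OldCStarModule A F]
  [CompleteSpace F]

/-- Characterizations of graph regularity for an essentially defined,
orthogonally closable operator `t : E → F`. -/
theorem graphRegular_characterizations (t : CStarReg.Unbounded A E F)
    (h1 : t.EssentiallyDefined) (h2 : IsEssential A t.adjDom) :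
    -- (a) ↔ (b): `Graph(t) ⊕ v Graph(t*) = E ⊕ F`
    (t.GraphRegular ↔
      t.graph + (fun q : F × E => (q.2, -q.1)) '' adjSet A t.graph = Set.univ) ∧
    -- (a) ↔ (c): `Range(1 + t*t) = E` and `Range(1 + tt*) = F`
    (t.GraphRegular ↔
      (Prod.snd '' oneAddSet t.adjCompGraph = Set.univ ∧
        Prod.snd '' oneAddSet t.compAdjGraph = Set.univ)) ∧
    -- `D(t*t)` is an essential core for `t`
    (t.GraphRegular →
      ortho A (restrictSet t.graph (Prod.fst '' t.adjCompGraph)) = ortho A t.graph) ∧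
    -- `t*` is graph regular
    (t.GraphRegular → ∀ s : CStarReg.Unbounded A F E, s.IsAdjointOf t → s.GraphRegular) ∧
    -- if `t` is orthogonally closed and `t*` is graph regular, then `t` is graph regular
    (t.OrthoClosed →
      ∀ s : CStarReg.Unbounded A F E, s.IsAdjointOf t → s.GraphRegular → t.GraphRegular) := by
  have hreg := t.graphRegular_iff_add_ortho_eq_univ h1
  refine ⟨?_, ?_, fun h => t.ortho_restrictSet_dom_adjComp (hreg.mp h),
    fun h _ hs => t.graphRegular_of_isAdjointOf hs h2 (hreg.mp h),
    fun ht _ hs hs_reg => hreg.mpr (t.add_ortho_eq_univ_of_isAdjointOf hs hs_reg ht)⟩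
  · rw [hreg, show (fun q : F × E => (q.2, -q.1)) '' adjSet A t.graph = ortho A t.graph from
      image_rot_adjSet]
  · rw [hreg, graph_add_ortho_eq_univ_iff, ran_oneAdd_adjComp_eq_univ_iff,
      ran_oneAdd_compAdj_eq_univ_iff]


end Statements
end
end

section
/- Let x ∈ Adj(F,E) be an adjointable operator between Hilbert C*-modules with Null(x) = {0} and Null(x*) = {0}. Then the inverse x^{-1}, with domain Range(x), is a graph regular operator, and (x^{-1})* = (x*)^{-1}. -/
open scoped RightActions Pointwise

noncomputable section

/-- The Hilbert C⋆-module class as in the older Mathlib (right `A`-action via `Aᵐᵒᵖ`). -/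
class CStarModuleOld (A E : Type*) [NonUnitalSemiring A] [StarRing A]
    [Module ℂ A] [AddCommGroup E] [Module ℂ E] [PartialOrder A] [SMul Aᵐᵒᵖ E] [Norm A] [Norm E]
    extends Inner A E where
  inner_add_right {x} {y} {z} : inner x (y + z) = inner x y + inner x z
  inner_self_nonneg {x} : 0 ≤ inner x x
  inner_self {x} : inner x x = 0 ↔ x = 0
  inner_op_smul_right {a : A} {x y : E} : inner x (y <• a) = inner x y * a
  inner_smul_right_complex {z : ℂ} {x} {y} : inner x (z • y) = z • inner x y
  star_inner x y : star (inner x y) = inner y x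
  norm_eq_sqrt_norm_inner_self x : ‖x‖ = √‖inner x x‖

/-!
The orthogonal complement of the graph `{(x f, f)}` of `x⁻¹` is the graph `{(e, -x* e)}`, as one
sees by moving `x` across the inner product; the double complement, the adjoint and the
orthogonal complement of `Range x` (which is `Null x*`) are computed the same way. The only
analytic input is that these two graphs together span `E ⊕ F`, i.e. that `1 + x* x` is
surjective on `F`. Being adjointable, `x` is bounded by the closed graph theorem, and
Cauchy–Schwarz gives `‖y‖ ≤ ‖(1 + s x* x) y‖` for every `s ≥ 0`. The method of continuity then
carries invertibility from `s = 0` to `s = 1`: the inverses have norm at most `1`, so a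
Neumann series passes from `s` to `s + 1/N` once `‖x* x‖ < N`.
-/

namespace CStarModuleOld

section Algebraic

variable {A E : Type*} [NonUnitalCStarAlgebra A] [PartialOrder A] [AddCommGroup E] [Module ℂ E]
  [SMul Aᵐᵒᵖ E] [Norm E] [CStarModuleOld A E]

lemma inner_add_left {x y z : E} : inner A (x + y) z = inner A x z + inner A y z := by
  rw [← star_inner, inner_add_right, star_add, star_inner, star_inner]

lemma inner_op_smul_left {a : A} {x y : E} : inner A (x <• a) y = star a * inner A x y := by
  rw [← star_inner, inner_op_smul_right, star_mul, star_inner]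

lemma inner_smul_left_complex {z : ℂ} {x y : E} : inner A (z • x) y = star z • inner A x y := by
  rw [← star_inner, inner_smul_right_complex, star_smul, star_inner]

lemma inner_zero_right {x : E} : inner A x (0 : E) = 0 := by
  simpa using (inner_add_right (A := A) (x := x) (y := 0) (z := 0)).symm

lemma inner_zero_left {x : E} : inner A (0 : E) x = 0 := by
  rw [← star_inner, inner_zero_right, star_zero]

lemma inner_neg_right {x y : E} : inner A x (-y) = -inner A x y := by
  rw [eq_neg_iff_add_eq_zero, ← inner_add_right, neg_add_cancel, inner_zero_right]

lemma inner_neg_left {x y : E} : inner A (-x) y = -inner A x y := by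
  rw [← star_inner, inner_neg_right, star_neg, star_inner]

lemma inner_sub_right {x y z : E} : inner A x (y - z) = inner A x y - inner A x z := by
  rw [sub_eq_add_neg, inner_add_right, inner_neg_right, ← sub_eq_add_neg]

lemma inner_sub_left {x y z : E} : inner A (x - y) z = inner A x z - inner A y z := by
  rw [sub_eq_add_neg, inner_add_left, inner_neg_left, ← sub_eq_add_neg]

variable (A) in
lemma norm_sq_eq (x : E) : ‖x‖ ^ 2 = ‖inner A x x‖ := by
  rw [norm_eq_sqrt_norm_inner_self (A := A) x, Real.sq_sqrt (norm_nonneg _)]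

variable (A) in
lemma eq_zero_of_forall_inner_left {x : E} (h : ∀ y : E, inner A x y = 0) : x = 0 :=
  inner_self.mp (h x)

variable (A) in
lemma eq_zero_of_forall_inner_right {x : E} (h : ∀ y : E, inner A y x = 0) : x = 0 :=
  inner_self.mp (h x)

variable (A) in
lemma ext_inner_right {x x' : E} (h : ∀ y : E, inner A x y = inner A x' y) : x = x' :=
  sub_eq_zero.mp <| eq_zero_of_forall_inner_left A fun y => by rw [inner_sub_left, h, sub_self]

variable (A) in
lemma ext_inner_left {x x' : E} (h : ∀ y : E, inner A y x = inner A y x') : x = x' :=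
  sub_eq_zero.mp <| eq_zero_of_forall_inner_right A fun y => by rw [inner_sub_right, h, sub_self]

end Algebraic

lemma normedSpaceCore (A : Type*) {E : Type*} [NonUnitalCStarAlgebra A] [PartialOrder A]
    [NormedAddCommGroup E] [Module ℂ E] [SMul Aᵐᵒᵖ E] [CStarModuleOld A E] :
    NormedSpace.Core ℂ E where
  norm_nonneg x := norm_nonneg x
  norm_smul c x := by
    simp [norm_eq_sqrt_norm_inner_self (A := A), inner_smul_left_complex,
      inner_smul_right_complex, norm_smul, ← mul_assoc]
  norm_triangle x y := norm_add_le x y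
  norm_eq_zero_iff x := norm_eq_zero

section CauchySchwarz

variable {A E : Type*} [NonUnitalCStarAlgebra A] [PartialOrder A] [StarOrderedRing A]
  [NormedAddCommGroup E] [Module ℂ E] [SMul Aᵐᵒᵖ E] [CStarModuleOld A E]

lemma inner_mul_inner_swap_le {x y : E} :
    inner A y x * inner A x y ≤ ‖x‖ ^ 2 • inner A y y := by
  rcases eq_or_ne x 0 with rfl | hx
  · simp [inner_zero_left, inner_zero_right]
  set r : ℝ := ‖x‖ ^ 2 with hr
  have hr_smul (b : A) : (r : ℂ) • b = r • b := Complex.coe_smul r b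
  -- expand `0 ≤ ⟪x <• a⋆ - r y, x <• a⋆ - r y⟫` and bound `a ⟪x, x⟫ a⋆ ≤ r a a⋆`
  have key (a : A) : (0 : A) ≤ r • (a * star a) - r • (a * inner A x y)
      - r • (inner A y x * star a) + r • (r • inner A y y) := calc
    (0 : A) ≤ inner A (x <• star a - (r : ℂ) • y) (x <• star a - (r : ℂ) • y) := inner_self_nonneg
    _ = a * inner A x x * star a - r • (a * inner A x y)
          - r • (inner A y x * star a) + r • (r • inner A y y) := by
      simp only [inner_sub_left, inner_sub_right, inner_op_smul_left, inner_op_smul_right,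
        inner_smul_left_complex, inner_smul_right_complex, star_star, Complex.star_def,
        Complex.conj_ofReal, hr_smul, sub_mul, smul_sub, smul_mul_assoc, mul_assoc]
      abel
    _ ≤ _ := by
      gcongr
      calc a * inner A x x * star a ≤ ‖inner A x x‖ • (a * star a) :=
            CStarAlgebra.star_right_conjugate_le_norm_smul (hb := star_inner x x)
        _ = r • (a * star a) := by rw [hr, norm_sq_eq A]
  specialize key (inner A y x)
  simp only [star_inner, sub_self, zero_sub, le_neg_add_iff_add_le, add_zero] at key
  rwa [smul_le_smul_iff_of_pos_left (pow_pos (norm_pos_iff.mpr hx) _)] at key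

variable (A) in
lemma norm_inner_le (x y : E) : ‖inner A x y‖ ≤ ‖x‖ * ‖y‖ := by
  refine (pow_le_pow_iff_left₀ (norm_nonneg _) (by positivity) two_ne_zero).mp ?_
  calc ‖inner A x y‖ ^ 2 = ‖inner A y x * inner A x y‖ := by
        rw [← star_inner x y, CStarRing.norm_star_mul_self, pow_two]
    _ ≤ ‖‖x‖ ^ 2 • inner A y y‖ := by
        refine CStarAlgebra.norm_le_norm_of_nonneg_of_le ?_ inner_mul_inner_swap_le
        rw [← star_inner x y]
        exact star_mul_self_nonneg _
    _ = (‖x‖ * ‖y‖) ^ 2 := by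
        rw [norm_smul, Real.norm_of_nonneg (by positivity), ← norm_sq_eq A, mul_pow]

variable (A) in
lemma continuous_inner_left (y : E) : Continuous fun x : E => inner A x y :=
  LipschitzWith.continuous (K := ‖y‖₊) <| LipschitzWith.of_dist_le_mul fun x x' => by
    rw [dist_eq_norm, dist_eq_norm, ← inner_sub_left (A := A), mul_comm]
    exact norm_inner_le A _ _

variable (A) in
lemma norm_le_of_inner_self_le {x y : E} (h : inner A x x ≤ inner A y x) : ‖x‖ ≤ ‖y‖ := by
  rcases eq_or_ne x 0 with rfl | hx
  · simp
  refine le_of_mul_le_mul_right ?_ (norm_pos_iff.mpr hx)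
  calc ‖x‖ * ‖x‖ = ‖inner A x x‖ := by rw [← sq, norm_sq_eq A]
    _ ≤ ‖inner A y x‖ := CStarAlgebra.norm_le_norm_of_nonneg_of_le inner_self_nonneg h
    _ ≤ ‖y‖ * ‖x‖ := norm_inner_le A y x

end CauchySchwarz

end CStarModuleOld

section MethodOfContinuity

variable {R : Type*} [NormedRing R] [HasSummableGeomSeries R]

lemma Units.isUnit_of_norm_sub_lt_one (u : Rˣ) (hu : ‖(↑u⁻¹ : R)‖ ≤ 1) {b : R}
    (hb : ‖b - u‖ < 1) : IsUnit b := by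
  nontriviality R
  refine (u.ofNearby b (hb.trans_le ?_)).isUnit
  exact one_le_inv₀ (Units.norm_pos u⁻¹) |>.mpr hu

variable {𝕜 X : Type*} [RCLike 𝕜] [NormedAddCommGroup X] [NormedSpace 𝕜 X]

lemma ContinuousLinearMap.norm_inverse_le_one (u : (X →L[𝕜] X)ˣ)
    (hu : ∀ y : X, ‖y‖ ≤ ‖(u : X →L[𝕜] X) y‖) : ‖(↑u⁻¹ : X →L[𝕜] X)‖ ≤ 1 :=
  ContinuousLinearMap.opNorm_le_bound _ zero_le_one fun y => calc
    ‖(↑u⁻¹ : X →L[𝕜] X) y‖ ≤ ‖(u : X →L[𝕜] X) ((↑u⁻¹ : X →L[𝕜] X) y)‖ := hu _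
    _ = 1 * ‖y‖ := by
      rw [← mul_apply_eq_comp, Units.mul_inv, one_apply_eq_self, one_mul]

theorem ContinuousLinearMap.isUnit_one_add_of_norm_le [CompleteSpace X] (T : X →L[𝕜] X)
    (hT : ∀ s : ℝ, 0 ≤ s → ∀ y : X, ‖y‖ ≤ ‖y + (s : 𝕜) • T y‖) : IsUnit (1 + T) := by
  obtain ⟨N, hN⟩ := exists_nat_gt ‖T‖
  have hN₀ : (0 : ℝ) < N := (norm_nonneg T).trans_lt hN
  have hstep (k : ℕ) : IsUnit (1 + ((k / N : ℝ) : 𝕜) • T) := by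
    induction k with
    | zero => simp
    | succ k ih =>
      obtain ⟨u, hu⟩ := ih
      refine u.isUnit_of_norm_sub_lt_one (norm_inverse_le_one u fun y => ?_) ?_
      · simpa [hu] using hT (k / N) (by positivity) y
      · rw [hu, add_sub_add_left_eq_sub, ← sub_smul, norm_smul]
        calc ‖((↑(k + 1) / N : ℝ) : 𝕜) - ((k / N : ℝ) : 𝕜)‖ * ‖T‖ = ‖T‖ / N := by
              rw [← RCLike.ofReal_sub, RCLike.norm_ofReal, Nat.cast_succ, add_div,
                add_sub_cancel_left, abs_of_pos (by positivity), one_div_mul_eq_div]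
          _ < 1 := (div_lt_one hN₀).mpr hN
  simpa [hN₀.ne'] using hstep N

end MethodOfContinuity

namespace CStarReg

lemma inner_prod_def {A E F : Type*} [Add A] [Inner A E] [Inner A F] (p q : E × F) :
    inner A p q = inner A p.1 q.1 + inner A p.2 q.2 :=
  rfl

namespace Adjointable

section Algebraic

variable {A E F : Type*} [NonUnitalCStarAlgebra A] [PartialOrder A]
  [AddCommGroup E] [Module ℂ E] [SMul Aᵐᵒᵖ E] [Norm E] [CStarModuleOld A E]
  [AddCommGroup F] [Module ℂ F] [SMul Aᵐᵒᵖ F] [Norm F] [CStarModuleOld A F]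
  (x : Adjointable A F E)

lemma inner_adjFun (z : E) (y : F) : inner A (x.adjFun z) y = inner A z (x.toFun y) := by
  rw [← CStarModuleOld.star_inner, ← x.adjoint_eq, CStarModuleOld.star_inner]

def adjoint : Adjointable A E F where
  toFun := x.adjFun
  adjFun := x.toFun
  adjoint_eq := x.inner_adjFun

@[simp]
lemma adjoint_toFun : x.adjoint.toFun = x.adjFun := rfl

lemma map_add (y y' : F) : x.toFun (y + y') = x.toFun y + x.toFun y' :=
  CStarModuleOld.ext_inner_right A fun z => by
    simp only [CStarModuleOld.inner_add_left, x.adjoint_eq]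

lemma map_smul (c : ℂ) (y : F) : x.toFun (c • y) = c • x.toFun y :=
  CStarModuleOld.ext_inner_right A fun z => by
    simp only [CStarModuleOld.inner_smul_left_complex, x.adjoint_eq]

lemma map_op_smul (a : A) (y : F) : x.toFun (y <• a) = x.toFun y <• a :=
  CStarModuleOld.ext_inner_right A fun z => by
    simp only [CStarModuleOld.inner_op_smul_left, x.adjoint_eq]

def toLinearMap : F →ₗ[ℂ] E where
  toFun := x.toFun
  map_add' := x.map_add
  map_smul' := x.map_smul

lemma map_zero : x.toFun 0 = 0 := x.toLinearMap.map_zero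

lemma map_sub (y y' : F) : x.toFun (y - y') = x.toFun y - x.toFun y' :=
  x.toLinearMap.map_sub y y'

end Algebraic

section Bounded

variable {A E F : Type*} [NonUnitalCStarAlgebra A] [PartialOrder A] [StarOrderedRing A]
  [NormedAddCommGroup E] [NormedSpace ℂ E] [SMul Aᵐᵒᵖ E] [CStarModuleOld A E] [CompleteSpace E]
  [NormedAddCommGroup F] [NormedSpace ℂ F] [SMul Aᵐᵒᵖ F] [CStarModuleOld A F] [CompleteSpace F]
  (x : Adjointable A F E)

lemma continuous_toFun : Continuous x.toFun := by
  have hgraph : (x.toLinearMap.graph : Set (F × E)) =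
      ⋂ z : E, {p | inner A p.2 z = inner A p.1 (x.adjFun z)} := by
    ext p
    simp only [SetLike.mem_coe, LinearMap.mem_graph_iff, Set.mem_iInter, Set.mem_ofPred_eq]
    refine ⟨fun h z => h ▸ x.adjoint_eq p.1 z, fun h => ?_⟩
    exact CStarModuleOld.ext_inner_right A fun z => (h z).trans (x.adjoint_eq p.1 z).symm
  refine x.toLinearMap.continuous_of_isClosed_graph ?_
  rw [hgraph]
  exact isClosed_iInter fun z => isClosed_eq
    ((CStarModuleOld.continuous_inner_left A z).comp continuous_snd)
    ((CStarModuleOld.continuous_inner_left A (x.adjFun z)).comp continuous_fst)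

def toCLM : F →L[ℂ] E := ⟨x.toLinearMap, x.continuous_toFun⟩

end Bounded

section OneAddAdjointComp

variable {A E F : Type*} [NonUnitalCStarAlgebra A] [PartialOrder A] [StarOrderedRing A]
  [NormedAddCommGroup E] [Module ℂ E] [SMul Aᵐᵒᵖ E] [CStarModuleOld A E]
  [NormedAddCommGroup F] [Module ℂ F] [SMul Aᵐᵒᵖ F] [CStarModuleOld A F]
  (x : Adjointable A F E)

lemma norm_le_norm_add_smul_adjFun_toFun {s : ℝ} (hs : 0 ≤ s) (y : F) :
    ‖y‖ ≤ ‖y + (s : ℂ) • x.adjFun (x.toFun y)‖ := by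
  refine CStarModuleOld.norm_le_of_inner_self_le A ?_
  rw [CStarModuleOld.inner_add_left, CStarModuleOld.inner_smul_left_complex, inner_adjFun,
    Complex.star_def, Complex.conj_ofReal, Complex.coe_smul]
  exact le_add_of_nonneg_right (smul_nonneg hs CStarModuleOld.inner_self_nonneg)

lemma surjective_add_adjFun_toFun [CompleteSpace E] [CompleteSpace F] :
    Function.Surjective fun y : F => y + x.adjFun (x.toFun y) := by
  let : NormedSpace ℂ E := .ofCore (CStarModuleOld.normedSpaceCore A)
  let : NormedSpace ℂ F := .ofCore (CStarModuleOld.normedSpaceCore A)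
  obtain ⟨u, hu⟩ := (x.adjoint.toCLM.comp x.toCLM).isUnit_one_add_of_norm_le
    fun s hs y => x.norm_le_norm_add_smul_adjFun_toFun hs y
  have hsurj : Function.Surjective (u : F →L[ℂ] F) :=
    (ContinuousLinearEquiv.unitsEquiv ℂ F u).surjective
  rw [hu] at hsurj
  exact hsurj

end OneAddAdjointComp

section InverseGraph

variable {A E F : Type*} [NonUnitalCStarAlgebra A] [PartialOrder A]
  [AddCommGroup E] [Module ℂ E] [SMul Aᵐᵒᵖ E] [Norm E] [CStarModuleOld A E]
  [AddCommGroup F] [Module ℂ F] [SMul Aᵐᵒᵖ F] [Norm F] [CStarModuleOld A F]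
  (x : Adjointable A F E)

def invGraph : Set (E × F) := {p | x.toFun p.2 = p.1}

def inverse (hx : ∀ y : F, x.toFun y = 0 → y = 0) : Unbounded A E F where
  graph := x.invGraph
  zero_mem := x.map_zero
  add_mem p q hp hq := by
    simp only [invGraph, Set.mem_ofPred_eq, Prod.fst_add, Prod.snd_add, x.map_add] at *
    rw [hp, hq]
  smul_mem c p hp := by
    simp only [invGraph, Set.mem_ofPred_eq, Prod.smul_fst, Prod.smul_snd, x.map_smul] at *
    rw [hp]
  smulA_mem a p hp := by
    simp only [invGraph, Set.mem_ofPred_eq, x.map_op_smul] at *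
    rw [hp]
  single_valued y hy := hx y hy

lemma image_fst_invGraph : Prod.fst '' x.invGraph = Set.range x.toFun := by
  ext e
  exact ⟨fun ⟨p, hp, he⟩ => ⟨p.2, hp.trans he⟩, fun ⟨y, hy⟩ => ⟨(e, y), hy, rfl⟩⟩

lemma ortho_range_toFun : ortho A (Set.range x.toFun) = {e | x.adjFun e = 0} := by
  ext e
  simp only [ortho, Set.forall_mem_range, Set.mem_ofPred_eq, ← inner_adjFun]
  exact ⟨CStarModuleOld.eq_zero_of_forall_inner_left A,
    fun h y => by rw [h, CStarModuleOld.inner_zero_left]⟩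

lemma ortho_invGraph : ortho A x.invGraph = {p | p.2 = -x.adjFun p.1} := by
  ext ⟨e, f⟩
  simp only [ortho, invGraph, Set.mem_ofPred_eq, Prod.forall, inner_prod_def]
  rw [eq_neg_iff_add_eq_zero]
  constructor
  · intro h
    refine CStarModuleOld.eq_zero_of_forall_inner_left A fun y => ?_
    rw [CStarModuleOld.inner_add_left, inner_adjFun, add_comm]
    exact h _ y rfl
  · rintro h _ y rfl
    rw [← inner_adjFun, ← CStarModuleOld.inner_add_left, add_comm, h,
      CStarModuleOld.inner_zero_left]

lemma ortho_ortho_invGraph : ortho A (ortho A x.invGraph) = x.invGraph := by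
  rw [ortho_invGraph]
  ext ⟨e, f⟩
  simp only [ortho, invGraph, Set.mem_ofPred_eq, Prod.forall, inner_prod_def]
  constructor
  · intro h
    refine (sub_eq_zero.mp (CStarModuleOld.eq_zero_of_forall_inner_left A fun z => ?_)).symm
    rw [CStarModuleOld.inner_sub_left, x.adjoint_eq, sub_eq_add_neg,
      ← CStarModuleOld.inner_neg_right]
    exact h z _ rfl
  · rintro rfl z _ rfl
    rw [CStarModuleOld.inner_neg_right, x.adjoint_eq, add_neg_cancel]

lemma adjSet_invGraph : adjSet A x.invGraph = x.adjoint.invGraph := by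
  ext ⟨f, e⟩
  simp only [adjSet, invGraph, adjoint_toFun, Set.mem_ofPred_eq, Prod.forall]
  constructor
  · intro h
    exact CStarModuleOld.ext_inner_left A fun y => by rw [← x.adjoint_eq, h _ y rfl]
  · rintro rfl _ y rfl
    exact (x.adjoint_eq y e).symm

lemma invGraph_add_ortho (hsurj : Function.Surjective fun y : F => y + x.adjFun (x.toFun y)) :
    x.invGraph + ortho A x.invGraph = Set.univ := by
  refine Set.eq_univ_of_forall fun ⟨e, f⟩ => ?_
  obtain ⟨y, hy⟩ := hsurj (f + x.adjFun e)
  refine Set.mem_add.mpr ⟨(x.toFun y, y), rfl, (e - x.toFun y, f - y), ?_, by simp⟩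
  simp only [ortho_invGraph, Set.mem_ofPred_eq]
  rw [← adjoint_toFun, x.adjoint.map_sub, adjoint_toFun, eq_sub_of_add_eq' hy]
  abel

end InverseGraph

end Adjointable

end CStarReg

section Statements

open CStarReg Unbounded

variable {A : Type*} [NonUnitalCStarAlgebra A] [PartialOrder A] [StarOrderedRing A]
variable {E : Type*} [NormedAddCommGroup E] [Module ℂ E] [SMul Aᵐᵒᵖ E] [CStarModuleOld A E]
  [CompleteSpace E]
variable {F : Type*} [NormedAddCommGroup F] [Module ℂ F] [SMul Aᵐᵒᵖ F] [CStarModuleOld A F]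
  [CompleteSpace F]

/-- If `x ∈ Adj(F, E)` has trivial kernel and its adjoint has trivial
kernel, then `x⁻¹` (with domain `Range(x)`) is graph regular and `(x⁻¹)* = (x*)⁻¹`. -/
theorem inverse_adjointable_graphRegular (x : Adjointable A F E)
    (hx : ∀ y : F, x.toFun y = 0 → y = 0)
    (hxs : ∀ z : E, x.adjFun z = 0 → z = 0) :
    (∃ u : CStarReg.Unbounded A E F, u.graph = {p : E × F | x.toFun p.2 = p.1}) ∧
    ∀ u : CStarReg.Unbounded A E F, u.graph = {p : E × F | x.toFun p.2 = p.1} →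
      u.GraphRegular ∧ adjSet A u.graph = {q : F × E | x.adjFun q.2 = q.1} := by
  refine ⟨⟨x.inverse hx, rfl⟩, fun u hu => ?_⟩
  replace hu : u.graph = x.invGraph := hu
  refine ⟨⟨?_, ?_, ?_⟩, hu ▸ x.adjSet_invGraph⟩
  · rw [EssentiallyDefined, IsEssential, dom, hu, x.image_fst_invGraph, x.ortho_range_toFun]
    exact Set.ext fun e => ⟨hxs e, fun h => h ▸ x.adjoint.map_zero⟩
  · rw [OrthoClosed, hu, x.ortho_ortho_invGraph]
  · rw [hu, x.invGraph_add_ortho x.surjective_add_adjFun_toFun]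
end Statements
end
end

section
/- Let X be a locally compact Hausdorff space and m : X → ℂ with reg(m) dense in X. Then: (1) t_m is normal, i.e. t_m* t_m = t_m t_m*, and t_m* t_m is essentially self-adjoint ((t_m* t_m)* = (t_m* t_m)**); (2) D(t_m* t_m) is an essential core for t_m, i.e. Graph(t_m restricted to D(t_m* t_m))^⊥ = Graph(t_m)^⊥; (3) Range(1 + t_m* t_m) = {g ∈ C₀(X) : g(x) = 0 for all x ∈ singsuppʳ(m)}, and in particular this range is essential. -/
open scoped RightActions Pointwise

noncomputable section

section CommutativeCase

open CStarReg Unbounded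

open scoped ZeroAtInfty

variable {X : Type*} [TopologicalSpace X] [LocallyCompactSpace X] [T2Space X]

/-- The largest open subset of `X` on which `m` is continuous. -/
def reg (m : X → ℂ) : Set X := ⋃₀ {U : Set X | IsOpen U ∧ ContinuousOn m U}

/-- The set of boundary points of `reg m` near which `m` admits a continuous `ℂ`-valued
extension from `reg m`. -/
def regB (m : X → ℂ) : Set X :=
  {x ∈ frontier (reg m) | ∃ U : Set X, IsOpen U ∧ U ⊆ closure (reg m) ∧ x ∈ U ∧
    ∃ mt : X → ℂ, ContinuousOn mt U ∧ Set.EqOn m mt (U ∩ reg m)}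

/-- The set of boundary points of `reg m` near which `m` admits a continuous extension
with values in the Riemann sphere `ℂ ∪ {∞}` taking the value `∞` there. -/
def regInfty (m : X → ℂ) : Set X :=
  {x ∈ frontier (reg m) | ∃ U : Set X, IsOpen U ∧ U ⊆ closure (reg m) ∧ x ∈ U ∧
    ∃ mt : X → OnePoint ℂ, ContinuousOn mt U ∧
      (∀ y ∈ U ∩ reg m, mt y = (m y : OnePoint ℂ)) ∧ mt x = OnePoint.infty}

/-- The residual singular support `singsuppʳ(m)`. -/
def singSuppR (m : X → ℂ) : Set X := frontier (reg m) \ (regB m ∪ regInfty m)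

/-- `h'` is the canonical extension `ĥ` of `h`: it agrees with `h` off `regB h` and with
the (unique) continuous extension of `h` at points of `regB h`. -/
def IsHatOf (h h' : X → ℂ) : Prop :=
  (∀ x ∉ regB h, h' x = h x) ∧
  ∀ x ∈ regB h, ∀ (U : Set X) (mt : X → ℂ), IsOpen U → U ⊆ closure (reg h) → x ∈ U →
    ContinuousOn mt U → Set.EqOn h mt (U ∩ reg h) → h' x = mt x

/-- `g` is the graph of the multiplication operator `t_m` on `C₀(X)`:
`D(t_m) = {f ∈ C₀(X) | (mf)^ ∈ C₀(X)}` and `t_m f = (mf)^`. -/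
def IsMulOpGraph (m : X → ℂ) (g : Set (C₀(X, ℂ) × C₀(X, ℂ))) : Prop :=
  g = {p | IsHatOf (fun x => m x * p.1 x) (fun x => p.2 x)}

end CommutativeCase

/-!
On the dense open set `reg m` everything is pointwise multiplication: the graph of `t_m` is the
set of pairs `(f, g)` with `g = m f` on `reg m`, its adjoint is multiplication by `conj m`, and
`t_m* t_m` is multiplication by `|m|²` on the domain of `t_m`. Functions compactly supported in
`reg m` take the value `1` at any given point of `reg m`, which pins down adjoints and orthogonal
complements by continuity and density.

Normality comes from the identity `|m f|² = conj f ⬝ |m|² f`: it shows that `m f` vanishes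
wherever `f` does, so that `conj m ⬝ f = conj (m f) ⬝ f / conj f` is again continuous.

For the range, `g = f + |m|² f` forces `f = g / (1 + |m|²)` and `m f = g m / (1 + |m|²)`. These
extend continuously across `regB m` and `regInfty m`, because `(1 + |z|²)⁻¹` and
`z (1 + |z|²)⁻¹` extend continuously to the Riemann sphere, and across `singSuppR m` when `g`
vanishes there. Conversely, if `f` or `|m|² f` is nonzero at a boundary point, then
`m = m f / f`, respectively `m = conj (|m|² f) / conj (m f)`, extends continuously there into
`ℂ`, respectively into the Riemann sphere with the value `∞`.
-/

open Filter Topology Set CStarReg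
open scoped ZeroAtInfty OnePoint

section LocalExtension

variable {X α : Type*} [TopologicalSpace X] [TopologicalSpace α] {R : Set X}

def HasLocalExtensionAt (κ : X → α) (R : Set X) (x : X) : Prop :=
  ∃ U φ, IsOpen U ∧ x ∈ U ∧ ContinuousOn φ U ∧ EqOn κ φ (U ∩ R)

variable [T2Space α]

lemma eqOn_of_local_extensions (hR : Dense R) {κ φ₁ φ₂ : X → α} {U₁ U₂ : Set X}
    (hU₁ : IsOpen U₁) (hU₂ : IsOpen U₂) (hφ₁ : ContinuousOn φ₁ U₁) (hφ₂ : ContinuousOn φ₂ U₂)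
    (h₁ : EqOn κ φ₁ (U₁ ∩ R)) (h₂ : EqOn κ φ₂ (U₂ ∩ R)) : EqOn φ₁ φ₂ (U₁ ∩ U₂) :=
  EqOn.of_subset_closure (fun _ hy => (h₁ ⟨hy.1.1, hy.2⟩).symm.trans (h₂ ⟨hy.1.2, hy.2⟩))
    (hφ₁.mono inter_subset_left) (hφ₂.mono inter_subset_right) inter_subset_left
    (hR.open_subset_closure_inter (hU₁.inter hU₂))

lemma exists_extension_continuousAt (hR : Dense R) (κ : X → α) :
    ∃ μ : X → α, EqOn κ μ R ∧ ∀ x, HasLocalExtensionAt κ R x → ContinuousAt μ x := by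
  classical
  -- `μ y` is the value at `y` of a local extension chosen around `y` itself
  let μ : X → α := fun y =>
    if h : HasLocalExtensionAt κ R y then h.choose_spec.choose y else κ y
  have hμ : ∀ {U φ}, IsOpen U → ContinuousOn φ U → EqOn κ φ (U ∩ R) → EqOn μ φ U := by
    intro U φ hU hφ hκφ y hy
    have hy' : HasLocalExtensionAt κ R y := ⟨U, φ, hU, hy, hφ, hκφ⟩
    obtain ⟨hV, hyV, hψ, hκψ⟩ := hy'.choose_spec.choose_spec
    simp only [μ, dif_pos hy']
    exact eqOn_of_local_extensions hR hV hU hψ hφ hκψ hκφ ⟨hyV, hy⟩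
  refine ⟨μ, fun y hy => ?_, fun x ⟨U, φ, hU, hxU, hφ, hκφ⟩ => ?_⟩
  · by_cases h : HasLocalExtensionAt κ R y
    · obtain ⟨hV, hyV, hψ, hκψ⟩ := h.choose_spec.choose_spec
      exact (hκψ ⟨hyV, hy⟩).trans (hμ hV hψ hκψ hyV).symm
    · simp only [μ, dif_neg h]
  · exact (hφ.continuousAt (hU.mem_nhds hxU)).congr
      (eventuallyEq_of_mem (hU.mem_nhds hxU) (hμ hU hφ hκφ).symm)

end LocalExtension

section RiemannSphere

variable {𝕜 X : Type*} [NormedField 𝕜] [TopologicalSpace X]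

open Classical in
def divInfty (a b : 𝕜) : OnePoint 𝕜 := if b = 0 then ∞ else ↑(a / b)

lemma continuousAt_divInfty {a b : X → 𝕜} {x : X} (ha : ContinuousAt a x)
    (hb : ContinuousAt b x) (hax : a x ≠ 0) : ContinuousAt (fun z => divInfty (a z) (b z)) x := by
  by_cases hbx : b x = 0
  · simp only [ContinuousAt, divInfty, if_pos hbx]
    refine OnePoint.hasBasis_nhds_infty.tendsto_right_iff.mpr fun s hs => ?_
    obtain ⟨r, hr⟩ := hs.2.isBounded.subset_closedBall (0 : 𝕜)
    have hlt : ∀ᶠ z in 𝓝 x, ‖b z‖ * r < ‖a z‖ := by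
      have hb0 : Tendsto (fun z => ‖b z‖ * r) (𝓝 x) (𝓝 0) := by
        simpa [hbx] using (hb.norm.mul_const r).tendsto
      exact hb0.eventually_lt ha.norm (norm_pos_iff.mpr hax)
    filter_upwards [hlt] with z hz
    by_cases hbz : b z = 0
    · simp [hbz]
    · refine Or.inl ⟨a z / b z, fun hmem => ?_, by simp [hbz]⟩
      have := hr hmem
      rw [Metric.mem_closedBall, dist_zero_right, norm_div,
        div_le_iff₀ (norm_pos_iff.mpr hbz)] at this
      linarith [mul_comm r ‖b z‖]
  · refine (OnePoint.continuous_coe.continuousAt.comp (ha.div hb hbx)).congr ?_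
    filter_upwards [hb.eventually_ne hbx] with z hz
    simp [divInfty, hz]

end RiemannSphere

section ZeroAtInfty

variable {X : Type*} [TopologicalSpace X]

lemma exists_zeroAtInfty_mul {E : Type*} [NormedRing E] (g : C₀(X, E)) {h : X → E} {C : ℝ}
    (hh : ∀ x, ‖h x‖ ≤ C) (hc : ∀ x, g x ≠ 0 → ContinuousAt h x) :
    ∃ F : C₀(X, E), ∀ x, F x = g x * h x := by
  have hbdd (l : Filter X) : IsBoundedUnder (· ≤ ·) l (norm ∘ h) := isBoundedUnder_of ⟨C, hh⟩
  have hcont : Continuous fun x => g x * h x := by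
    refine continuous_iff_continuousAt.mpr fun x => ?_
    by_cases hgx : g x = 0
    · have hg0 : Tendsto g (𝓝 x) (𝓝 0) := hgx ▸ (map_continuous g).continuousAt
      simpa [ContinuousAt, hgx] using hg0.zero_mul_isBoundedUnder_le (hbdd _)
    · exact (map_continuous g).continuousAt.mul (hc x hgx)
  exact ⟨⟨⟨_, hcont⟩, g.zero_at_infty'.zero_mul_isBoundedUnder_le (hbdd _)⟩, fun _ => rfl⟩

variable {R : Set X}

lemma exists_zeroAtInfty_apply_eq_one [LocallyCompactSpace X] [T2Space X] (hR : IsOpen R)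
    {x₀ : X} (hx₀ : x₀ ∈ R) :
    ∃ f : C₀(X, ℂ), f x₀ = 1 ∧ HasCompactSupport f ∧ tsupport f ⊆ R := by
  obtain ⟨f, hf1, hfc, hfR, -⟩ :=
    exists_continuousMap_one_of_isCompact_subset_isOpen isCompact_singleton hR
      (singleton_subset_iff.mpr hx₀)
  have hcs : HasCompactSupport fun x => (f x : ℂ) :=
    HasCompactSupport.comp_left hfc Complex.ofReal_zero
  refine ⟨⟨⟨fun x => (f x : ℂ), by fun_prop⟩, hcs.is_zero_at_infty⟩, by simp [hf1 rfl], hcs,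
    (tsupport_comp_subset Complex.ofReal_zero f).trans hfR⟩

end ZeroAtInfty

section MulRel

variable {X : Type*} [TopologicalSpace X] {R : Set X} {w : X → ℂ}

def mulRel (R : Set X) (w : X → ℂ) : Set (C₀(X, ℂ) × C₀(X, ℂ)) :=
  {p | ∀ x ∈ R, p.2 x = w x * p.1 x}

lemma compSet_mulRel (R : Set X) (w₁ w₂ : X → ℂ) :
    compSet (mulRel R w₂) (mulRel R w₁) =
      {p | (∃ g, (p.1, g) ∈ mulRel R w₁) ∧ p ∈ mulRel R (w₂ * w₁)} := by
  ext ⟨f, k⟩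
  constructor
  · rintro ⟨g, hg, hk⟩
    exact ⟨⟨g, hg⟩, fun x hx => by rw [hk x hx, hg x hx, Pi.mul_apply, mul_assoc]⟩
  · rintro ⟨⟨g, hg⟩, hk⟩
    exact ⟨g, hg, fun x hx => by rw [hk x hx, hg x hx, Pi.mul_apply, mul_assoc]⟩

lemma apply_eq_zero_of_mulRel (hR : Dense R) {f g k : C₀(X, ℂ)} (hg : (f, g) ∈ mulRel R w)
    (hk : (f, k) ∈ mulRel R (star w * w)) {x : X} (hfx : f x = 0) : g x = 0 := by
  have hnorm : (fun x => star (g x) * g x) = fun x => star (f x) * k x :=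
    Continuous.ext_on hR (by fun_prop) (by fun_prop) fun x hx => by
      simp only [hg x hx, hk x hx, Pi.mul_apply, Pi.star_apply, star_mul]
      ring
  simpa [hfx] using congrFun hnorm x

lemma exists_mem_mulRel_star (hR : Dense R) {f g k : C₀(X, ℂ)} (hg : (f, g) ∈ mulRel R w)
    (hk : (f, k) ∈ mulRel R (star w * w)) : ∃ j, (f, j) ∈ mulRel R (star w) := by
  -- `conj g ⬝ f / conj f` equals `conj w ⬝ f` on `R`, and is continuous since `g` vanishes with `f`
  have hbound (x : X) : ‖f x / star (f x)‖ ≤ 1 := by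
    rw [norm_div, norm_star]
    exact div_self_le_one _
  have hcont (x : X) (hgx : star g x ≠ 0) : ContinuousAt (fun x => f x / star (f x)) x := by
    have hfx : f x ≠ 0 := fun hfx => hgx (by simp [apply_eq_zero_of_mulRel hR hg hk hfx])
    exact (map_continuous f).continuousAt.div (map_continuous (star f)).continuousAt
      (star_ne_zero.mpr hfx)
  obtain ⟨j, hj⟩ := exists_zeroAtInfty_mul (star g) hbound hcont
  refine ⟨j, fun x hx => ?_⟩
  rw [hj, ZeroAtInftyContinuousMap.coe_star, Pi.star_apply, hg x hx, Pi.star_apply, star_mul]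
  by_cases hfx : f x = 0
  · simp [hfx]
  · have := star_ne_zero.mpr hfx
    field_simp

lemma compSet_mulRel_star_comm (hR : Dense R) (w : X → ℂ) :
    compSet (mulRel R (star w)) (mulRel R w) = compSet (mulRel R w) (mulRel R (star w)) := by
  rw [compSet_mulRel, compSet_mulRel, mul_comm w]
  ext p
  refine and_congr_left fun hk =>
    ⟨fun ⟨_, hg⟩ => exists_mem_mulRel_star hR hg hk, fun ⟨_, hj⟩ => ?_⟩
  simpa using exists_mem_mulRel_star (w := star w) hR hj (by simpa [mul_comm] using hk)

lemma exists_mem_mulRel_of_tsupport_subset (hR : IsOpen R) (hw : ContinuousOn w R)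
    {f : C₀(X, ℂ)} (hf : HasCompactSupport f) (hfR : tsupport f ⊆ R) :
    ∃ g, (f, g) ∈ mulRel R w := by
  have hcont : Continuous fun x => w x * f x :=
    (hw.mul (map_continuous f).continuousOn).continuous_of_tsupport_subset hR
      (tsupport_mul_subset_right.trans hfR)
  exact ⟨⟨⟨_, hcont⟩, hf.mul_left.is_zero_at_infty⟩, fun _ _ => rfl⟩

lemma exists_mem_compSet_mulRel_apply_eq_one [LocallyCompactSpace X] [T2Space X]
    (hR : IsOpen R) (hw : ContinuousOn w R) {x : X} (hx : x ∈ R) :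
    ∃ f g k, f x = 1 ∧ (f, g) ∈ mulRel R w ∧ (f, k) ∈ compSet (mulRel R (star w)) (mulRel R w) := by
  obtain ⟨f, hf1, hfc, hfR⟩ := exists_zeroAtInfty_apply_eq_one hR hx
  obtain ⟨g, hg⟩ := exists_mem_mulRel_of_tsupport_subset hR hw hfc hfR
  obtain ⟨k, hk⟩ := exists_mem_mulRel_of_tsupport_subset hR (hw.star.mul hw) hfc hfR
  exact ⟨f, g, k, hf1, hg, by rw [compSet_mulRel]; exact ⟨⟨g, hg⟩, hk⟩⟩

end MulRel

section Orthogonality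

variable {X : Type*} [TopologicalSpace X] [PartialOrder C₀(X, ℂ)] [StarOrderedRing C₀(X, ℂ)]
  {R : Set X} {w : X → ℂ} {P : Set (C₀(X, ℂ) × C₀(X, ℂ))}

lemma inner_zeroAtInfty_apply (f g : C₀(X, ℂ)) (x : X) :
    (inner C₀(X, ℂ) f g : C₀(X, ℂ)) x = star (f x) * g x :=
  mul_comm (g x) (star (f x))

lemma inner_prod_zeroAtInfty_apply (u p : C₀(X, ℂ) × C₀(X, ℂ)) (x : X) :
    (inner C₀(X, ℂ) u p : C₀(X, ℂ)) x = star (u.1 x) * p.1 x + star (u.2 x) * p.2 x := by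
  rw [← inner_zeroAtInfty_apply, ← inner_zeroAtInfty_apply]
  rfl

lemma adjSet_eq_mulRel (hR : Dense R) (hP : P ⊆ mulRel R w)
    (hP₁ : ∀ x ∈ R, ∃ p ∈ P, p.1 x = 1) : adjSet C₀(X, ℂ) P = mulRel R (star w) := by
  ext q
  constructor
  · intro hq x hx
    obtain ⟨p, hp, hp₁⟩ := hP₁ x hx
    simpa [inner_zeroAtInfty_apply, hP hp x hx, hp₁] using (congrArg (· x) (hq p hp)).symm
  · intro hq p hp
    refine DFunLike.coe_injective <| Continuous.ext_on hR (map_continuous _) (map_continuous _)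
      fun x hx => ?_
    simp only [inner_zeroAtInfty_apply, hP hp x hx, hq x hx, Pi.star_apply, star_mul]
    ring

lemma ortho_eq_ortho_mulRel (hR : Dense R) (hP : P ⊆ mulRel R w)
    (hP₁ : ∀ x ∈ R, ∃ p ∈ P, p.1 x = 1) :
    ortho C₀(X, ℂ) P = ortho C₀(X, ℂ) (mulRel R w) := by
  refine Subset.antisymm (fun u hu p hp => ?_) (fun u hu p hp => hu p (hP hp))
  have hu₀ (x : X) (hx : x ∈ R) : star (u.1 x) + star (u.2 x) * w x = 0 := by
    obtain ⟨p', hp', hp'₁⟩ := hP₁ x hx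
    simpa [inner_prod_zeroAtInfty_apply, hP hp' x hx, hp'₁] using congrArg (· x) (hu p' hp')
  refine DFunLike.coe_injective <| Continuous.ext_on hR (map_continuous _) (map_continuous _)
    fun x hx => ?_
  simp only [inner_prod_zeroAtInfty_apply, hp x hx, ZeroAtInftyContinuousMap.coe_zero,
    Pi.zero_apply]
  linear_combination p.1 x * hu₀ x hx

lemma isEssential_of_forall_exists_apply_eq_one (hR : Dense R) {S : Set C₀(X, ℂ)}
    (hS : ∀ x ∈ R, ∃ f ∈ S, f x = 1) : IsEssential C₀(X, ℂ) S := by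
  ext u
  refine ⟨fun hu => DFunLike.coe_injective <|
    Continuous.ext_on hR (map_continuous _) (map_continuous _) fun x hx => ?_, ?_⟩
  · obtain ⟨f, hf, hf₁⟩ := hS x hx
    simpa [inner_zeroAtInfty_apply, hf₁] using congrArg (· x) (hu f hf)
  · rintro rfl f -
    ext x
    simp

variable [LocallyCompactSpace X] [T2Space X]

lemma adjSet_mulRel (hR : Dense R) (hR' : IsOpen R) (hw : ContinuousOn w R) :
    adjSet C₀(X, ℂ) (mulRel R w) = mulRel R (star w) :=
  adjSet_eq_mulRel hR Subset.rfl fun _ hx =>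
    let ⟨f, g, _, hf₁, hg, _⟩ := exists_mem_compSet_mulRel_apply_eq_one hR' hw hx
    ⟨(f, g), hg, hf₁⟩

end Orthogonality

section Regularity

variable {X : Type*} [TopologicalSpace X] {m : X → ℂ}

lemma isOpen_reg (m : X → ℂ) : IsOpen (reg m) :=
  isOpen_sUnion fun _ hU => hU.1

lemma continuousOn_reg (m : X → ℂ) : ContinuousOn m (reg m) := fun _ ⟨_, hU, hxU⟩ =>
  ((hU.2 _ hxU).continuousAt (hU.1.mem_nhds hxU)).continuousWithinAt

lemma subset_reg {U : Set X} (hU : IsOpen U) (hmU : ContinuousOn m U) : U ⊆ reg m :=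
  fun _ hx => ⟨U, ⟨hU, hmU⟩, hx⟩

lemma frontier_reg_eq_compl (hm : Dense (reg m)) : frontier (reg m) = (reg m)ᶜ := by
  rw [(isOpen_reg m).frontier_eq, hm.closure_eq, compl_eq_univ_sdiff]

lemma isHatOf_iff {h h' : X → ℂ} (hh : Dense (reg h)) (hh' : Continuous h') :
    IsHatOf h h' ↔ EqOn h' h (reg h) := by
  refine ⟨fun hhat x hx => hhat.1 x fun hB => ?_, fun heq => ⟨fun x hxB => ?_, ?_⟩⟩
  · exact (frontier_reg_eq_compl hh ▸ hB.1) hx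
  · by_contra hne
    refine hxB ⟨frontier_reg_eq_compl hh ▸ fun hx => hne (heq hx), univ, isOpen_univ,
      by simp [hh.closure_eq], trivial, h', hh'.continuousOn, fun y hy => (heq hy.2).symm⟩
  · intro x _ U mt hU _ hxU hmt hEq
    exact EqOn.of_subset_closure (fun y hy => (heq hy.2).trans (hEq hy)) hh'.continuousOn hmt
      inter_subset_left (hh.open_subset_closure_inter hU) hxU

lemma eq_mulRel_of_isMulOpGraph (hm : Dense (reg m)) {g : Set (C₀(X, ℂ) × C₀(X, ℂ))}
    (hg : IsMulOpGraph m g) : g = mulRel (reg m) m := by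
  rw [hg]
  ext ⟨f, f'⟩
  have hreg : reg m ⊆ reg (m * ⇑f) :=
    subset_reg (isOpen_reg m) ((continuousOn_reg m).mul (map_continuous f).continuousOn)
  change IsHatOf (m * ⇑f) f' ↔ EqOn f' (m * ⇑f) (reg m)
  rw [isHatOf_iff (hm.mono hreg) (map_continuous f')]
  refine ⟨fun h => h.mono hreg, fun h => h.of_subset_closure (map_continuous f').continuousOn
    (continuousOn_reg _) hreg (by simp [hm.closure_eq])⟩

lemma hasLocalExtensionAt_of_notMem_singSuppR (hm : Dense (reg m)) {x : X}
    (hx : x ∉ singSuppR m) : HasLocalExtensionAt (fun y => (m y : OnePoint ℂ)) (reg m) x := by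
  by_cases hxm : x ∈ reg m
  · exact ⟨reg m, _, isOpen_reg m, hxm,
      OnePoint.continuous_coe.comp_continuousOn (continuousOn_reg m), fun _ _ => rfl⟩
  have hx' : x ∈ regB m ∪ regInfty m := by
    by_contra h
    exact hx ⟨frontier_reg_eq_compl hm ▸ hxm, h⟩
  rcases hx' with ⟨-, U, hU, -, hxU, mt, hmt, hEq⟩ | ⟨-, U, hU, -, hxU, mt, hmt, hEq, -⟩
  · exact ⟨U, _, hU, hxU, OnePoint.continuous_coe.comp_continuousOn hmt,
      fun y hy => congrArg _ (hEq hy)⟩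
  · exact ⟨U, mt, hU, hxU, hmt, fun y hy => (hEq y hy).symm⟩

/-- `g₀ ⬝ (h ∘ m)`, with `h` extended by `0` at `∞`, is continuous across `regB m` and
`regInfty m`, and also across `singSuppR m` where `g₀` vanishes. -/
lemma exists_zeroAtInfty_mul_comp (hm : Dense (reg m)) {g₀ : C₀(X, ℂ)}
    (hg₀ : ∀ x ∈ singSuppR m, g₀ x = 0) (h : C₀(ℂ, ℂ)) :
    ∃ F : C₀(X, ℂ), ∀ x ∈ reg m, F x = g₀ x * h (m x) := by
  obtain ⟨μ, hμm, hμ⟩ := exists_extension_continuousAt hm (fun y => (m y : OnePoint ℂ))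
  let q : C(OnePoint ℂ, ℂ) := OnePoint.continuousMapMk h 0
    (by simpa [coclosedCompact_eq_cocompact] using h.zero_at_infty')
  obtain ⟨C, hC⟩ := isCompact_univ.exists_bound_of_continuousOn q.continuous.continuousOn
  obtain ⟨F, hF⟩ := exists_zeroAtInfty_mul g₀ (h := q ∘ μ) (fun x => hC _ trivial)
    fun x hx => q.continuous.continuousAt.comp
      (hμ x (hasLocalExtensionAt_of_notMem_singSuppR hm fun hs => hx (hg₀ x hs)))
  exact ⟨F, fun x hx => by rw [hF, Function.comp_apply, ← hμm hx]; rfl⟩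

end Regularity

section Range

variable {X : Type*} [TopologicalSpace X] {m : X → ℂ}

def invOneAddNormSq : C₀(ℂ, ℂ) where
  toFun z := ((1 + ‖z‖ ^ 2)⁻¹ : ℝ)
  continuous_toFun := Complex.continuous_ofReal.comp <|
    (continuous_const.add (continuous_norm.pow 2)).inv₀ fun z =>
      (by positivity : (1 + ‖z‖ ^ 2 : ℝ) ≠ 0)
  zero_at_infty' := by
    have h : Tendsto (fun z : ℂ => (1 + ‖z‖ ^ 2)⁻¹) (cocompact ℂ) (𝓝 0) :=
      tendsto_inv_atTop_zero.comp <| tendsto_atTop_add_const_left _ 1 <|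
        (tendsto_pow_atTop two_ne_zero).comp tendsto_norm_cocompact_atTop
    exact Complex.ofReal_zero ▸ (Complex.continuous_ofReal.tendsto 0).comp h

lemma invOneAddNormSq_apply (z : ℂ) : invOneAddNormSq z = ((1 + ‖z‖ ^ 2)⁻¹ : ℝ) := rfl

def mulInvOneAddNormSq : C₀(ℂ, ℂ) where
  toFun z := z * invOneAddNormSq z
  continuous_toFun := by fun_prop
  zero_at_infty' := by
    refine squeeze_zero_norm (fun z => ?_)
      (tendsto_inv_atTop_zero.comp tendsto_norm_cocompact_atTop)
    rcases eq_or_ne z 0 with rfl | hz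
    · simp
    have hz' : 0 < ‖z‖ := norm_pos_iff.mpr hz
    rw [Function.comp_apply, norm_mul, invOneAddNormSq_apply, Complex.norm_real, norm_inv,
      Real.norm_of_nonneg (by positivity), ← div_eq_mul_inv, div_le_iff₀ (by positivity)]
    field_simp
    nlinarith

lemma mulInvOneAddNormSq_apply (z : ℂ) : mulInvOneAddNormSq z = z * invOneAddNormSq z := rfl

lemma apply_eq_zero_of_mulRel_of_mem_singSuppR (hm : Dense (reg m)) {f g : C₀(X, ℂ)}
    (hg : (f, g) ∈ mulRel (reg m) m) {x : X} (hx : x ∈ singSuppR m) : f x = 0 := by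
  by_contra hfx
  refine hx.2 (Or.inl ⟨hx.1, {y | f y ≠ 0}, isOpen_ne_fun (map_continuous f) continuous_const,
    by simp [hm.closure_eq], hfx, fun y => g y / f y, ?_, fun y hy => ?_⟩)
  · exact (map_continuous g).continuousOn.div (map_continuous f).continuousOn fun _ hy => hy
  · exact eq_div_of_mul_eq hy.1 (hg y hy.2).symm

lemma apply_eq_zero_of_mulRel_star_mul_of_mem_singSuppR (hm : Dense (reg m))
    {f g k : C₀(X, ℂ)} (hg : (f, g) ∈ mulRel (reg m) m) (hk : (f, k) ∈ mulRel (reg m) (star m * m))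
    {x : X} (hx : x ∈ singSuppR m) : k x = 0 := by
  have hgx : g x = 0 :=
    apply_eq_zero_of_mulRel hm hg hk (apply_eq_zero_of_mulRel_of_mem_singSuppR hm hg hx)
  by_contra hkx
  -- near `x`, `m = conj k / conj g` extends to the Riemann sphere, with value `∞` at `x`
  have hcont : ContinuousOn (fun y => divInfty (star (k y)) (star (g y))) {y | k y ≠ 0} :=
    fun y hy => (continuousAt_divInfty (map_continuous (star k)).continuousAt
      (map_continuous (star g)).continuousAt (star_ne_zero.mpr hy)).continuousWithinAt
  have hext : ∀ y ∈ {y | k y ≠ 0} ∩ reg m, divInfty (star (k y)) (star (g y)) = m y := by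
    rintro y ⟨hky, hy⟩
    have hky' : star (m y) * m y * f y ≠ 0 := hk y hy ▸ hky
    have hmy : star (m y) ≠ 0 := left_ne_zero_of_mul (left_ne_zero_of_mul hky')
    have hfy : star (f y) ≠ 0 := star_ne_zero.mpr (right_ne_zero_of_mul hky')
    have hgy : star (g y) ≠ 0 := by
      rw [hg y hy, star_mul]
      exact mul_ne_zero hfy hmy
    simp only [divInfty]
    rw [if_neg hgy, hk y hy, hg y hy]
    congr 1
    simp only [Pi.mul_apply, Pi.star_apply, star_mul, star_star]
    field_simp
  exact hx.2 (Or.inr ⟨hx.1, _, isOpen_ne_fun (map_continuous k) continuous_const,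
    by simp [hm.closure_eq], hkx, _, hcont, hext, by simp [divInfty, hgx]⟩)

lemma snd_image_oneAddSet_compSet_mulRel (hm : Dense (reg m)) :
    Prod.snd '' oneAddSet (compSet (mulRel (reg m) (star m)) (mulRel (reg m) m)) =
      {g : C₀(X, ℂ) | ∀ x ∈ singSuppR m, g x = 0} := by
  rw [compSet_mulRel]
  ext g₀
  constructor
  · rintro ⟨p, ⟨k, ⟨⟨g, hg⟩, hk⟩, hpk⟩, rfl⟩ x hx
    simp [hpk, apply_eq_zero_of_mulRel_of_mem_singSuppR hm hg hx,
      apply_eq_zero_of_mulRel_star_mul_of_mem_singSuppR hm hg hk hx]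
  · intro hg₀
    -- `g₀ = f + |m|² f` for `f = g₀ / (1 + |m|²)`, and then `m f = g₀ m / (1 + |m|²)`
    obtain ⟨f, hf⟩ := exists_zeroAtInfty_mul_comp hm hg₀ invOneAddNormSq
    obtain ⟨g, hg⟩ := exists_zeroAtInfty_mul_comp hm hg₀ mulInvOneAddNormSq
    refine ⟨(f, g₀), ⟨g₀ - f, ⟨⟨g, fun x hx => ?_⟩, fun x hx => ?_⟩, by simp⟩, rfl⟩
    · rw [hg x hx, hf x hx, mulInvOneAddNormSq_apply]
      ring
    · have hpos : (1 + ‖m x‖ ^ 2 : ℂ) ≠ 0 := by norm_cast; positivity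
      simp only [ZeroAtInftyContinuousMap.coe_sub, Pi.sub_apply, hf x hx, invOneAddNormSq_apply,
        Pi.mul_apply, Pi.star_apply, RCLike.star_def, Complex.conj_mul']
      push_cast
      field_simp
      ring

end Range

section CommutativeCase

open CStarReg Unbounded

open scoped ZeroAtInfty

variable {X : Type*} [TopologicalSpace X] [LocallyCompactSpace X] [T2Space X]

variable [PartialOrder C₀(X, ℂ)] [StarOrderedRing C₀(X, ℂ)]

/-- For `m : X → ℂ` with `reg(m)` dense: `t_m` is normal, `t_m* t_m` is
essentially self-adjoint, `D(t_m* t_m)` is an essential core for `t_m`, and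
`Range(1 + t_m* t_m) = {g ∈ C₀(X) | g ≡ 0 on singsuppʳ(m)}`, which is essential. -/
theorem mulOp_normal_core_range (m : X → ℂ) (hm : Dense (reg m))
    (t : CStarReg.Unbounded C₀(X, ℂ) C₀(X, ℂ) C₀(X, ℂ)) (htm : IsMulOpGraph m t.graph) :
    -- (1) `t_m` is normal and `t_m* t_m` is essentially self-adjoint
    t.adjCompGraph = t.compAdjGraph ∧
    adjSet C₀(X, ℂ) t.adjCompGraph = adjSet C₀(X, ℂ) (adjSet C₀(X, ℂ) t.adjCompGraph) ∧
    -- (2) `D(t_m* t_m)` is an essential core for `t_m`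
    ortho C₀(X, ℂ) (restrictSet t.graph (Prod.fst '' t.adjCompGraph)) =
      ortho C₀(X, ℂ) t.graph ∧
    -- (3) the range of `1 + t_m* t_m`
    Prod.snd '' oneAddSet t.adjCompGraph =
      {g : C₀(X, ℂ) | ∀ x ∈ singSuppR m, g x = 0} ∧
    IsEssential C₀(X, ℂ) (Prod.snd '' oneAddSet t.adjCompGraph) := by
  have hR := isOpen_reg m
  have hmR := continuousOn_reg m
  have hG : t.graph = mulRel (reg m) m := eq_mulRel_of_isMulOpGraph hm htm
  have hA : adjSet C₀(X, ℂ) t.graph = mulRel (reg m) (star m) := hG ▸ adjSet_mulRel hm hR hmR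
  have hT : t.adjCompGraph = compSet (mulRel (reg m) (star m)) (mulRel (reg m) m) := by
    rw [adjCompGraph, hA, hG]
  have hTm : t.adjCompGraph ⊆ mulRel (reg m) (star m * m) := by
    rw [hT, compSet_mulRel]
    exact fun _ hp => hp.2
  have htest := fun x (hx : x ∈ reg m) => exists_mem_compSet_mulRel_apply_eq_one hR hmR hx
  have hadjT : adjSet C₀(X, ℂ) t.adjCompGraph = mulRel (reg m) (star m * m) := by
    rw [adjSet_eq_mulRel hm hTm fun x hx => ?_, star_mul, star_star]
    obtain ⟨f, -, k, hf₁, -, hk⟩ := htest x hx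
    exact ⟨(f, k), hT ▸ hk, hf₁⟩
  have hrange := hT ▸ snd_image_oneAddSet_compSet_mulRel hm
  refine ⟨?_, ?_, ?_, hrange, ?_⟩
  · rw [adjCompGraph, compAdjGraph, hA, hG]
    exact compSet_mulRel_star_comm hm m
  · rw [hadjT, adjSet_mulRel (w := star m * m) hm hR (hmR.star.mul hmR), star_mul, star_star]
  · rw [hG]
    refine ortho_eq_ortho_mulRel hm (fun _ hp => hp.1) fun x hx => ?_
    obtain ⟨f, g, k, hf₁, hg, hk⟩ := htest x hx
    exact ⟨(f, g), ⟨hg, (f, k), hT ▸ hk, rfl⟩, hf₁⟩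
  · rw [hrange]
    refine isEssential_of_forall_exists_apply_eq_one hm fun x hx => ?_
    obtain ⟨f, hf₁, -, hfR⟩ := exists_zeroAtInfty_apply_eq_one hR hx
    refine ⟨f, fun y hy => image_eq_zero_of_notMem_tsupport fun hyf => ?_, hf₁⟩
    exact (frontier_reg_eq_compl hm ▸ hy.1) (hfR hyf)

end CommutativeCase
end
end
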